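/- For nonzero vectors α, β in ℝ², one has |⟨β⟩ - (α·β)/⟨α⟩| ≲ |β| θ(α,β)² + ⟨β⟩ (1/⟨α⟩² + 1/⟨β⟩²), i.e., there is a universal constant C such that the left side is at most C times the right side. -/
import Mathlib


open InnerProductGeometry
open scoped RealInnerProductSpace

noncomputable section

/-- Japanese bracket `⟨r⟩ = (1 + r²)^{1/2}`. -/
def jb (r : ℝ) : ℝ := Real.sqrt (1 + r ^ 2)

lemma jb_sq (r : ℝ) : jb r ^ 2 = 1 + r ^ 2 := by
  have : (0:ℝ) ≤ 1 + r ^ 2 := by positivity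
  simp [jb, Real.sq_sqrt this]

lemma one_le_jb (r : ℝ) : 1 ≤ jb r := by
  rw [show (1:ℝ) = Real.sqrt 1 by simp [Real.sqrt_one]]
  exact Real.sqrt_le_sqrt (by nlinarith)

lemma jb_pos (r : ℝ) : 0 < jb r := lt_of_lt_of_le one_pos (one_le_jb r)

lemma le_jb (r : ℝ) (hr : 0 ≤ r) : r ≤ jb r := by
  have h := jb_sq r
  nlinarith [jb_pos r]

lemma one_sub_cos_le (x : ℝ) : 1 - Real.cos x ≤ x ^ 2 / 2 := by
  have h : Real.cos x = 1 - 2 * Real.sin (x / 2) ^ 2 := by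
    have := Real.cos_two_mul (x / 2)
    rw [show 2 * (x / 2) = x by ring] at this
    rw [this, Real.cos_sq']; ring
  have h2 : Real.sin (x / 2) ^ 2 ≤ (x / 2) ^ 2 := Real.sin_sq_le_sq
  nlinarith

lemma key (a b t : ℝ) (ha0 : 0 ≤ a) (hb0 : 0 ≤ b) :
    |jb b - Real.cos t * (a * b) / jb a| ≤
      1 * (b * t ^ 2 + jb b * (1 / jb a ^ 2 + 1 / jb b ^ 2)) := by
  set c := Real.cos t with hc
  set A := jb a with hA
  set B := jb b with hB
  have hA1 : 1 ≤ A := one_le_jb a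
  have hB1 : 1 ≤ B := one_le_jb b
  have hA0 : 0 < A := jb_pos a
  have hB0 : 0 < B := jb_pos b
  have hAsq : A ^ 2 = 1 + a ^ 2 := jb_sq a
  have hBsq : B ^ 2 = 1 + b ^ 2 := jb_sq b
  have haA : a ≤ A := le_jb a ha0
  have hbB : b ≤ B := le_jb b hb0
  have hc1 : |c| ≤ 1 := Real.abs_cos_le_one t
  have hcos : 1 - c ≤ t ^ 2 / 2 := one_sub_cos_le t
  have hBb : (B - b) * B ≤ 1 := by nlinarith
  have hAa : (A - a) * A ≤ 1 := by nlinarith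
  have hsplit : B - c * (a * b) / A = (B - b) + b * (1 - c) + b * c * (A - a) / A := by
    field_simp
    ring
  rw [hsplit]
  have h1 : |B - b| = B - b := abs_of_nonneg (by linarith)
  have h2 : |b * (1 - c)| = b * (1 - c) := abs_of_nonneg (by
    nlinarith [abs_le.mp hc1])
  have h3 : |b * c * (A - a) / A| ≤ b * (A - a) / A := by
    rw [abs_div, abs_of_pos hA0]
    gcongr
    rw [abs_mul, abs_mul, abs_of_nonneg hb0, abs_of_nonneg (by linarith : (0:ℝ) ≤ A - a)]
    have h4 : b * |c| ≤ b * 1 := mul_le_mul_of_nonneg_left hc1 hb0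
    nlinarith [mul_le_mul_of_nonneg_right h4 (by linarith : (0:ℝ) ≤ A - a)]
  calc |(B - b) + b * (1 - c) + b * c * (A - a) / A|
      ≤ |B - b| + |b * (1 - c)| + |b * c * (A - a) / A| := by
        exact (abs_add_le _ _).trans (by gcongr; exact abs_add_le _ _)
    _ ≤ (B - b) + b * (1 - c) + b * (A - a) / A := by rw [h1, h2]; linarith
    _ ≤ 1 * (b * t ^ 2 + B * (1 / A ^ 2 + 1 / B ^ 2)) := by
        have e1 : B - b ≤ B / B ^ 2 := by
          rw [le_div_iff₀ (by positivity : (0:ℝ) < B ^ 2)]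
          nlinarith [mul_le_mul_of_nonneg_right hBb hB0.le]
        have e2 : b * (1 - c) ≤ b * t ^ 2 :=
          mul_le_mul_of_nonneg_left (hcos.trans (by linarith [sq_nonneg t])) hb0
        have e3 : b * (A - a) / A ≤ B / A ^ 2 := by
          rw [div_le_div_iff₀ hA0 (by positivity : (0:ℝ) < A ^ 2)]
          nlinarith [mul_le_mul_of_nonneg_left hAa (mul_nonneg hb0 hA0.le),
            mul_le_mul_of_nonneg_right hbB hA0.le]
        have e4 : B * (1 / A ^ 2 + 1 / B ^ 2) = B / A ^ 2 + B / B ^ 2 := by ring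
        rw [one_mul, e4]
        linarith

/-- There is a universal constant `C` such that for all nonzero
`α, β ∈ ℝ²`, `|⟨β⟩ - (α·β)/⟨α⟩| ≤ C (|β| θ(α,β)² + ⟨β⟩ (1/⟨α⟩² + 1/⟨β⟩²))`. -/
theorem bracket_null_symbol_le : ∃ C : ℝ, 0 < C ∧
    ∀ α β : EuclideanSpace ℝ (Fin 2), α ≠ 0 → β ≠ 0 →
      |jb ‖β‖ - ⟪α, β⟫ / jb ‖α‖| ≤
        C * (‖β‖ * angle α β ^ 2 + jb ‖β‖ * (1 / jb ‖α‖ ^ 2 + 1 / jb ‖β‖ ^ 2)) := by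
  refine ⟨1, one_pos, fun α β hα hβ => ?_⟩
  rw [← cos_angle_mul_norm_mul_norm α β]
  exact key ‖α‖ ‖β‖ (angle α β) (norm_nonneg _) (norm_nonneg _)

end
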